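/- Let α be a slowly oscillating shift of (0,∞) with exponent function ω (so α(t) = t e^{ω(t)}), η(y) = y/(1−y), α̃ = η^{−1}∘α∘η, and c(y) = (1−α̃(y))/(1−y) for y ∈ (0,1). Then 0 < inf_{y∈(0,1)} c(y) ≤ sup_{y∈(0,1)} c(y) < ∞, and c∘η^{−1}(t) = (1+t)/(1+t e^{ω(t)}) is slowly oscillating at 0 and ∞ with limit 1 at 0. -/

import Mathlib

open Filter Set

noncomputable def osc {E : Type*} [NormedAddCommGroup E] (f : ℝ → E) (a b : ℝ) : ℝ :=
  sSup {d | ∃ t ∈ Set.Icc a b, ∃ τ ∈ Set.Icc a b, d = ‖f t - f τ‖}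

def SO {E : Type*} [NormedAddCommGroup E] (f : ℝ → E) : Prop :=
  ContinuousOn f (Set.Ioi 0) ∧ (∃ C, ∀ t ∈ Set.Ioi (0:ℝ), ‖f t‖ ≤ C) ∧
  ∀ l ∈ Set.Ioo (0:ℝ) 1,
    Tendsto (fun r => osc f (l * r) r) (nhdsWithin 0 (Set.Ioi 0)) (nhds 0) ∧
    Tendsto (fun r => osc f (l * r) r) atTop (nhds 0)

noncomputable def alphaTilde (α : ℝ → ℝ) : ℝ → ℝ :=
  fun y => α (y / (1 - y)) / (1 + α (y / (1 - y)))

/-!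
Substituting `y = t / (1 + t)` turns `(1 - α̃ y) / (1 - y)` into `(1 + t) / (1 + t e^{ω t})`,
which lies between `e^{-C}` and `e^{C}` when `|ω| ≤ C`. Near `0` this factor is `1 + O(t)`, and
near `∞` it is `e^{-ω t} + O(1/t)`; since `exp` is Lipschitz on `(-∞, C]`, the oscillation of
`e^{-ω}` on `[l r, r]` is controlled by that of `ω`, so the factor inherits slow oscillation.
-/

open Topology

section Oscillation

variable {E : Type*} [NormedAddCommGroup E]

lemma osc_nonneg (f : ℝ → E) (a b : ℝ) : 0 ≤ osc f a b :=
  Real.sSup_nonneg (by rintro x ⟨t, -, τ, -, rfl⟩; exact norm_nonneg _)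

lemma norm_sub_le_osc {f : ℝ → E} {a b C : ℝ} (hf : ∀ t ∈ Icc a b, ‖f t‖ ≤ C)
    {t τ : ℝ} (ht : t ∈ Icc a b) (hτ : τ ∈ Icc a b) : ‖f t - f τ‖ ≤ osc f a b := by
  refine le_csSup ⟨2 * C, ?_⟩ ⟨t, ht, τ, hτ, rfl⟩
  rintro x ⟨u, hu, v, hv, rfl⟩
  linarith [norm_sub_le (f u) (f v), hf u hu, hf v hv]

lemma osc_le_of_norm_sub_le {f g : ℝ → E} {a b ε δ : ℝ} (hab : a ≤ b)
    (hfg : ∀ t ∈ Icc a b, ‖f t - g t‖ ≤ ε)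
    (hg : ∀ t ∈ Icc a b, ∀ τ ∈ Icc a b, ‖g t - g τ‖ ≤ δ) :
    osc f a b ≤ 2 * ε + δ := by
  have ha : a ∈ Icc a b := left_mem_Icc.2 hab
  have hε : 0 ≤ ε := (norm_nonneg _).trans (hfg a ha)
  have hδ : 0 ≤ δ := (norm_nonneg _).trans (hg a ha a ha)
  refine Real.sSup_le ?_ (by positivity)
  rintro x ⟨t, ht, τ, hτ, rfl⟩
  calc ‖f t - f τ‖ ≤ ‖f t - g t‖ + ‖g t - g τ‖ + ‖g τ - f τ‖ := by
        linarith [norm_sub_le_norm_sub_add_norm_sub (f t) (g t) (f τ),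
          norm_sub_le_norm_sub_add_norm_sub (g t) (g τ) (f τ)]
    _ ≤ ε + δ + ε := by
        gcongr
        · exact hfg t ht
        · exact hg t ht τ hτ
        · rw [norm_sub_rev]; exact hfg τ hτ
    _ = 2 * ε + δ := by ring

lemma tendsto_osc_of_norm_sub_le {L : Filter ℝ} {f g : ℝ → E} {a b ε δ : ℝ → ℝ}
    (hab : ∀ᶠ r in L, a r ≤ b r)
    (hfg : ∀ᶠ r in L, ∀ t ∈ Icc (a r) (b r), ‖f t - g t‖ ≤ ε r)
    (hg : ∀ᶠ r in L, ∀ t ∈ Icc (a r) (b r), ∀ τ ∈ Icc (a r) (b r), ‖g t - g τ‖ ≤ δ r)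
    (hε : Tendsto ε L (𝓝 0)) (hδ : Tendsto δ L (𝓝 0)) :
    Tendsto (fun r => osc f (a r) (b r)) L (𝓝 0) := by
  refine squeeze_zero' (Eventually.of_forall fun r => osc_nonneg f _ _) ?_
    (by simpa using (hε.const_mul 2).add hδ)
  filter_upwards [hab, hfg, hg] with r hr hfgr hgr
  exact osc_le_of_norm_sub_le hr hfgr hgr

end Oscillation

lemma abs_exp_sub_exp_le {a b C : ℝ} (ha : a ≤ C) (hb : b ≤ C) :
    |Real.exp a - Real.exp b| ≤ Real.exp C * |a - b| := by
  wlog hba : b ≤ a generalizing a b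
  · rw [abs_sub_comm, abs_sub_comm a]; exact this hb ha (le_of_not_ge hba)
  have hsplit : Real.exp a - Real.exp b = Real.exp a * (1 - Real.exp (-(a - b))) := by
    rw [mul_sub, ← Real.exp_add]; ring_nf
  rw [abs_of_nonneg (sub_nonneg.2 (Real.exp_le_exp.2 hba)), abs_of_nonneg (sub_nonneg.2 hba),
    hsplit]
  exact mul_le_mul (Real.exp_le_exp.2 ha) (by linarith [Real.one_sub_le_exp_neg (a - b)])
    (sub_nonneg.2 (Real.exp_le_one_iff.2 (by linarith))) (Real.exp_pos C).le

/-- The paper's `c ∘ η⁻¹`. -/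
noncomputable def transplantedFactor (ω : ℝ → ℝ) (t : ℝ) : ℝ :=
  (1 + t) / (1 + t * Real.exp (ω t))

lemma abs_exp_sub_one_le_exp {w C : ℝ} (hw : |w| ≤ C) : |Real.exp w - 1| ≤ Real.exp C := by
  have hwC : Real.exp w ≤ Real.exp C := Real.exp_le_exp.2 (le_of_abs_le hw)
  have hC : 1 ≤ Real.exp C := Real.one_le_exp (by linarith [abs_nonneg w])
  rw [abs_le]
  constructor <;> linarith [Real.exp_pos w]

namespace transplantedFactor

variable {ω : ℝ → ℝ} {t C : ℝ}

lemma one_sub_alphaTilde_div_eq {α : ℝ → ℝ}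
    (hrepr : ∀ t ∈ Ioi (0:ℝ), α t = t * Real.exp (ω t)) (ht : 0 < t) :
    (1 - alphaTilde α (t / (1 + t))) / (1 - t / (1 + t)) = transplantedFactor ω t := by
  have h1t : 1 - t / (1 + t) = 1 / (1 + t) := by field_simp; ring
  have hη : t / (1 + t) / (1 - t / (1 + t)) = t := by rw [h1t]; field_simp
  have hd : 0 < 1 + t * Real.exp (ω t) := by positivity
  rw [alphaTilde, hη, hrepr t ht, h1t, transplantedFactor]
  field_simp
  ring

lemma exists_eq_one_sub_alphaTilde_div {α : ℝ → ℝ}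
    (hrepr : ∀ t ∈ Ioi (0:ℝ), α t = t * Real.exp (ω t)) {y : ℝ} (hy : y ∈ Ioo (0:ℝ) 1) :
    ∃ t > 0, (1 - alphaTilde α y) / (1 - y) = transplantedFactor ω t := by
  have h1y : 0 < 1 - y := sub_pos.2 hy.2
  refine ⟨y / (1 - y), div_pos hy.1 h1y, ?_⟩
  rw [← one_sub_alphaTilde_div_eq hrepr (div_pos hy.1 h1y)]
  congr <;> field_simp <;> ring

lemma exp_neg_le (ht : 0 < t) (hω : |ω t| ≤ C) : Real.exp (-C) ≤ transplantedFactor ω t := by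
  have hCω : Real.exp (-C) * Real.exp (ω t) ≤ 1 := by
    rw [← Real.exp_add]; exact Real.exp_le_one_iff.2 (by linarith [le_abs_self (ω t)])
  have hC : Real.exp (-C) ≤ 1 := Real.exp_le_one_iff.2 (by linarith [abs_nonneg (ω t)])
  rw [transplantedFactor, le_div_iff₀ (by positivity)]
  nlinarith

lemma le_exp (ht : 0 < t) (hω : |ω t| ≤ C) : transplantedFactor ω t ≤ Real.exp C := by
  have hCω : 1 ≤ Real.exp C * Real.exp (ω t) := by
    rw [← Real.exp_add]; exact Real.one_le_exp (by linarith [neg_abs_le (ω t)])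
  have hC : 1 ≤ Real.exp C := Real.one_le_exp (by linarith [abs_nonneg (ω t)])
  rw [transplantedFactor, div_le_iff₀ (by positivity)]
  nlinarith

lemma abs_sub_one_le (ht : 0 < t) (hω : |ω t| ≤ C) :
    |transplantedFactor ω t - 1| ≤ Real.exp C * t := by
  have hd : 1 ≤ 1 + t * Real.exp (ω t) := by nlinarith [Real.exp_pos (ω t)]
  have heq : transplantedFactor ω t - 1 =
      -(t * (Real.exp (ω t) - 1)) / (1 + t * Real.exp (ω t)) := by
    rw [transplantedFactor]; field_simp; ring
  rw [heq, abs_div, abs_neg, abs_mul, abs_of_pos ht, abs_of_pos (zero_lt_one.trans_le hd)]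
  calc t * |Real.exp (ω t) - 1| / (1 + t * Real.exp (ω t)) ≤ t * |Real.exp (ω t) - 1| :=
        div_le_self (by positivity) hd
    _ ≤ Real.exp C * t := by nlinarith [abs_exp_sub_one_le_exp hω]

lemma abs_sub_exp_neg_le (ht : 0 < t) (hω : |ω t| ≤ C) :
    |transplantedFactor ω t - Real.exp (-ω t)| ≤ Real.exp (3 * C) / t := by
  set w := ω t
  have hew : 0 < Real.exp w := Real.exp_pos w
  have heq : transplantedFactor ω t - Real.exp (-w) =
      (Real.exp w - 1) / (Real.exp w * (1 + t * Real.exp w)) := by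
    rw [transplantedFactor, Real.exp_neg]; field_simp; ring
  have hden : t * Real.exp (-(2 * C)) ≤ Real.exp w * (1 + t * Real.exp w) := by
    have h2w : Real.exp (-(2 * C)) ≤ Real.exp w * Real.exp w := by
      rw [← Real.exp_add]; exact Real.exp_le_exp.2 (by linarith [neg_abs_le w])
    nlinarith
  rw [heq, abs_div, abs_of_pos (by positivity : 0 < Real.exp w * (1 + t * Real.exp w))]
  calc |Real.exp w - 1| / (Real.exp w * (1 + t * Real.exp w))
      ≤ Real.exp C / (t * Real.exp (-(2 * C))) :=
        div_le_div₀ (Real.exp_pos C).le (abs_exp_sub_one_le_exp hω) (by positivity) hden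
    _ = Real.exp (3 * C) / t := by
        rw [Real.exp_neg, show 3 * C = C + 2 * C by ring, Real.exp_add]; field_simp

lemma tendsto_nhdsWithin_zero (hC : ∀ t ∈ Ioi (0:ℝ), |ω t| ≤ C) :
    Tendsto (transplantedFactor ω) (𝓝[>] 0) (𝓝 1) := by
  rw [tendsto_iff_norm_sub_tendsto_zero]
  refine squeeze_zero' (Eventually.of_forall fun t => norm_nonneg _) ?_
    (tendsto_nhdsWithin_of_tendsto_nhds
      ((continuous_const_mul (Real.exp C)).tendsto' 0 0 (mul_zero _)))
  filter_upwards [self_mem_nhdsWithin] with t ht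
  exact abs_sub_one_le ht (hC t ht)

lemma tendsto_osc_nhdsWithin_zero (hC : ∀ t ∈ Ioi (0:ℝ), |ω t| ≤ C) {l : ℝ}
    (hl : l ∈ Ioo (0:ℝ) 1) :
    Tendsto (fun r => osc (transplantedFactor ω) (l * r) r) (𝓝[>] 0) (𝓝 0) := by
  refine tendsto_osc_of_norm_sub_le (g := fun _ => 1) (δ := fun _ => 0)
    (ε := fun r => Real.exp C * r) ?_ ?_ ?_ ?_ tendsto_const_nhds
  · filter_upwards [self_mem_nhdsWithin] with r (hr : 0 < r)
    exact mul_le_of_le_one_left hr.le hl.2.le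
  · filter_upwards [self_mem_nhdsWithin] with r (hr : 0 < r) t ht
    have ht0 : 0 < t := (mul_pos hl.1 hr).trans_le ht.1
    calc _ ≤ Real.exp C * t := abs_sub_one_le ht0 (hC t ht0)
      _ ≤ Real.exp C * r := by gcongr; exact ht.2
  · exact Eventually.of_forall fun r t _ τ _ => by simp
  · exact tendsto_nhdsWithin_of_tendsto_nhds
      ((continuous_const_mul (Real.exp C)).tendsto' 0 0 (mul_zero _))

lemma tendsto_osc_atTop (hC : ∀ t ∈ Ioi (0:ℝ), ‖ω t‖ ≤ C) {l : ℝ} (hl : l ∈ Ioo (0:ℝ) 1)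
    (hosc : Tendsto (fun r => osc ω (l * r) r) atTop (𝓝 0)) :
    Tendsto (fun r => osc (transplantedFactor ω) (l * r) r) atTop (𝓝 0) := by
  refine tendsto_osc_of_norm_sub_le (g := fun t => Real.exp (-ω t))
    (ε := fun r => Real.exp (3 * C) / (l * r)) (δ := fun r => Real.exp C * osc ω (l * r) r)
    ?_ ?_ ?_ ?_ (by simpa using hosc.const_mul (Real.exp C))
  · filter_upwards [eventually_gt_atTop 0] with r hr
    exact mul_le_of_le_one_left hr.le hl.2.le
  · filter_upwards [eventually_gt_atTop 0] with r hr t ht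
    have ht0 : 0 < t := (mul_pos hl.1 hr).trans_le ht.1
    calc _ ≤ Real.exp (3 * C) / t := abs_sub_exp_neg_le ht0 (hC t ht0)
      _ ≤ Real.exp (3 * C) / (l * r) := by gcongr; exacts [mul_pos hl.1 hr, ht.1]
  · filter_upwards [eventually_gt_atTop 0] with r hr t ht τ hτ
    have hbdd (u : ℝ) (hu : u ∈ Icc (l * r) r) : ‖ω u‖ ≤ C :=
      hC u ((mul_pos hl.1 hr).trans_le hu.1)
    calc ‖Real.exp (-ω t) - Real.exp (-ω τ)‖ ≤ Real.exp C * |-ω t - -ω τ| :=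
          abs_exp_sub_exp_le ((neg_le_abs _).trans (hbdd t ht))
            ((neg_le_abs _).trans (hbdd τ hτ))
      _ ≤ Real.exp C * osc ω (l * r) r := by
          rw [neg_sub_neg, abs_sub_comm]
          gcongr
          exact norm_sub_le_osc hbdd ht hτ
  · exact tendsto_const_nhds.div_atTop (tendsto_id.const_mul_atTop hl.1)

lemma _root_.SO.transplantedFactor (hω : SO ω) : SO (transplantedFactor ω) := by
  obtain ⟨hcont, ⟨C, hC⟩, hosc⟩ := hω
  refine ⟨?_, ⟨Real.exp C, fun t (ht : 0 < t) => ?_⟩, fun l hl =>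
    ⟨tendsto_osc_nhdsWithin_zero hC hl, tendsto_osc_atTop hC hl (hosc l hl).2⟩⟩
  · refine ContinuousOn.div (by fun_prop) (by fun_prop) fun t (ht : 0 < t) => ?_
    have : 0 < t * Real.exp (ω t) := mul_pos ht (Real.exp_pos _)
    linarith
  · rw [Real.norm_eq_abs, abs_of_pos ((Real.exp_pos _).trans_le (exp_neg_le ht (hC t ht)))]
    exact le_exp ht (hC t ht)

end transplantedFactor

theorem transplanted_factor_SO (α : ℝ → ℝ) (ω : ℝ → ℝ)
    (hω_so : SO ω)
    (hrepr : ∀ t ∈ Set.Ioi (0:ℝ), α t = t * Real.exp (ω t)) :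
    (∃ m M : ℝ, 0 < m ∧
      (∀ y ∈ Set.Ioo (0:ℝ) 1, m ≤ (1 - alphaTilde α y) / (1 - y)) ∧
      (∀ y ∈ Set.Ioo (0:ℝ) 1, (1 - alphaTilde α y) / (1 - y) ≤ M)) ∧
    SO (fun t => (1 + t) / (1 + t * Real.exp (ω t))) ∧
    Tendsto (fun t => (1 + t) / (1 + t * Real.exp (ω t)))
      (nhdsWithin 0 (Set.Ioi 0)) (nhds 1) ∧
    (∀ t ∈ Set.Ioi (0:ℝ),
      (1 - alphaTilde α (t / (1 + t))) / (1 - t / (1 + t)) =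
        (1 + t) / (1 + t * Real.exp (ω t))) := by
  obtain ⟨C, hC⟩ := hω_so.2.1
  refine ⟨⟨Real.exp (-C), Real.exp C, Real.exp_pos _, fun y hy => ?_, fun y hy => ?_⟩,
    hω_so.transplantedFactor, transplantedFactor.tendsto_nhdsWithin_zero hC,
    fun t ht => transplantedFactor.one_sub_alphaTilde_div_eq hrepr ht⟩
  · obtain ⟨t, ht, heq⟩ := transplantedFactor.exists_eq_one_sub_alphaTilde_div hrepr hy
    exact heq ▸ transplantedFactor.exp_neg_le ht (hC t ht)
  · obtain ⟨t, ht, heq⟩ := transplantedFactor.exists_eq_one_sub_alphaTilde_div hrepr hy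
    exact heq ▸ transplantedFactor.le_exp ht (hC t ht)
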